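/- Let E be an r-stable space of measurable functions on ℝ³, where 2 < r < ∞. Then E ⊂ M^{2,r}(ℝ³) and there is a constant C with ‖f‖_{M^{2,r}} ≤ C‖f‖_E for all f ∈ E. -/

import Mathlib

open MeasureTheory Filter Set Metric
open scoped ENNReal NNReal Topology FourierTransform

noncomputable section
attribute [local instance] Classical.propDecidable

/-- Three dimensional Euclidean space. -/
abbrev E3 := EuclideanSpace ℝ (Fin 3)

/-- The Gaussian heat kernel on `ℝ³`. -/
def heatKernel (t : ℝ) (x : E3) : ℝ :=
  (4 * Real.pi * t) ^ (-(3:ℝ)/2) * Real.exp (-‖x‖^2 / (4*t))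

/-- The heat semigroup `e^{tΔ}`, acting by convolution with the heat kernel. -/
def heat {F : Type*} [NormedAddCommGroup F] [NormedSpace ℝ F] (t : ℝ) (f : E3 → F) :
    E3 → F :=
  fun x => ∫ y, heatKernel t (x - y) • f y

/-- The heat extension `t ↦ e^{tΔ}u₀` of initial data. -/
def heatFlow {F : Type*} [NormedAddCommGroup F] [NormedSpace ℝ F] (u₀ : E3 → F) :
    ℝ → E3 → F := fun t => heat t u₀

/-- The Koch–Tataru norm `‖u‖_{X_T}`. -/
def xNorm {F : Type*} [NormedAddCommGroup F] (T : ℝ) (u : ℝ → E3 → F) : ℝ≥0∞ :=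
  (⨆ t ∈ Ioo (0:ℝ) T, ENNReal.ofReal (Real.sqrt t) * ⨆ x : E3, (‖u t x‖₊ : ℝ≥0∞))
    + ⨆ t ∈ Ioo (0:ℝ) T, ⨆ x₀ : E3,
      (ENNReal.ofReal (t ^ (-(3:ℝ)/2)) *
        ∫⁻ s in Ioo (0:ℝ) t, ∫⁻ y in ball x₀ (Real.sqrt t), (‖u s y‖₊ : ℝ≥0∞) ^ 2) ^ ((1:ℝ)/2)

/-- Membership in `bmo⁻¹`: the Koch–Tataru norm of the heat extension is finite. -/
def MemBmoNeg1 (u₀ : E3 → E3) : Prop := xNorm 1 (heatFlow u₀) < ∞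

/-- Membership in `bmo⁻¹₀`: moreover `‖e^{tΔ}u₀‖_{X_T} → 0` as `T → 0`. -/
def MemBmoNeg1Zero (u₀ : E3 → E3) : Prop :=
  MemBmoNeg1 u₀ ∧ Tendsto (fun T => xNorm T (heatFlow u₀)) (𝓝[>] (0:ℝ)) (𝓝 0)

/-- Smooth compactly supported test function on `ℝ³`. -/
def IsTestFun (φ : E3 → ℝ) : Prop := ContDiff ℝ (⊤ : ℕ∞) φ ∧ HasCompactSupport φ

/-- Spatial partial derivative of a function on `ℝ³`. -/
def pdS (j : Fin 3) (φ : E3 → ℝ) (x : E3) : ℝ := fderiv ℝ φ x (EuclideanSpace.single j 1)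

/-- Weak (distributional) divergence-freeness of a vector field on `ℝ³`. -/
def DivFree (u₀ : E3 → E3) : Prop :=
  ∀ φ : E3 → ℝ, IsTestFun φ → (∫ x, ∑ j, u₀ x j * pdS j φ x) = 0

/-- Fourier symbol of the Leray projection `ℙ = Id − ∇Δ⁻¹div`. -/
def projSym (k l : Fin 3) (ξ : E3) : ℂ :=
  (if k = l then 1 else 0) - ((ξ k * ξ l / ‖ξ‖^2 : ℝ) : ℂ)

/-- The Navier–Stokes bilinear operator
`B(u,v)(t) = ∫₀ᵗ e^{(t−s)Δ} ℙ div (u ⊗ v) ds`, realized through the Fourier transform. -/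
def nsB (u v : ℝ → E3 → E3) : ℝ → E3 → E3 := fun t x =>
  (EuclideanSpace.equiv (Fin 3) ℝ).symm fun k =>
    ∫ s in (0:ℝ)..t,
      (𝓕⁻ (fun ξ : E3 =>
        (Complex.exp (-(4 * Real.pi^2 * (t - s) * ‖ξ‖^2 : ℝ)) : ℂ) *
        ∑ l, projSym k l ξ *
          ∑ j, (2 * Real.pi * Complex.I * ((ξ j : ℝ) : ℂ)) *
            𝓕 (fun y : E3 => ((u s y j * v s y l : ℝ) : ℂ)) ξ) x).re

/-- `u` solves the integral Navier–Stokes equations `u = e^{tΔ}u₀ − B(u,u)` on `(0,T)`. -/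
def IsMildSolution (T : ℝ) (u₀ : E3 → E3) (u : ℝ → E3 → E3) : Prop :=
  ∀ t ∈ Ioo (0:ℝ) T, ∀ x, u t x = heat t u₀ x - nsB u u t x

/-- `C₀` is a Koch–Tataru constant: a universal constant for the bilinear estimate on `X_T`. -/
def IsKTConstant (C₀ : ℝ) : Prop :=
  0 < C₀ ∧ ∀ (T : ℝ) (u v : ℝ → E3 → E3),
    xNorm T (nsB u v) ≤ ENNReal.ofReal C₀ * xNorm T u * xNorm T v

/-! ### Weak solutions -/

/-- Space-time test function supported in the time slab `(0,T)`. -/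
def IsTestST (T : ℝ) (φ : ℝ × E3 → ℝ) : Prop :=
  ContDiff ℝ (⊤ : ℕ∞) φ ∧ HasCompactSupport φ ∧ ∀ p : ℝ × E3, p.1 ∉ Ioo (0:ℝ) T → φ p = 0

/-- Time derivative of a space-time function. -/
def pdt (φ : ℝ × E3 → ℝ) (p : ℝ × E3) : ℝ := fderiv ℝ φ p (1, 0)

/-- Spatial partial derivative of a space-time function. -/
def pdx (j : Fin 3) (φ : ℝ × E3 → ℝ) (p : ℝ × E3) : ℝ :=
  fderiv ℝ φ p (0, EuclideanSpace.single j 1)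

/-- Spatial Laplacian of a space-time function. -/
def lapx (φ : ℝ × E3 → ℝ) (p : ℝ × E3) : ℝ := ∑ j, pdx j (fun q => pdx j φ q) p

/-- `g` is the weak spatial gradient of `f` (i.e. `g j = ∂_j f` distributionally). -/
def IsWeakGradient (f : E3 → E3) (g : Fin 3 → E3 → E3) : Prop :=
  ∀ j, ∀ φ : E3 → ℝ, IsTestFun φ →
    (∫ x, pdS j φ x • f x) = - ∫ x, φ x • g j x

/-- `u(t,·)` is weakly divergence free for a.e. `t ∈ (0,T)`. -/
def SpaceDivFree (T : ℝ) (u : ℝ → E3 → E3) : Prop :=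
  ∀ᵐ t ∂(volume.restrict (Ioo (0:ℝ) T)),
    ∀ φ : E3 → ℝ, IsTestFun φ → (∫ x, ∑ j, u t x j * pdS j φ x) = 0

/-- Weak (distributional) formulation of the Navier–Stokes equations
`∂ₜu = Δu − div(u⊗u) − ∇p` on `(0,T) × ℝ³`. -/
def NSWeakPDE (T : ℝ) (u : ℝ → E3 → E3) (p : ℝ → E3 → ℝ) : Prop :=
  ∀ k : Fin 3, ∀ φ : ℝ × E3 → ℝ, IsTestST T φ →
    (∫ t in Ioo (0:ℝ) T, ∫ x,
      (u t x k * (pdt φ (t, x) + lapx φ (t, x))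
        + (∑ j, u t x j * u t x k * pdx j φ (t, x))
        + p t x * pdx k φ (t, x))) = 0

/-- Suitable weak Leray solution of the Navier–Stokes equations on `(0,T)` with
initial value `u₀`: a weak Leray solution (finite energy, weak form of the equations,
strong `L²` continuity at `t = 0`, Leray energy inequality) satisfying in addition the
local energy balance with a dissipation measure `μ ≥ 0`. -/
def IsSuitableLeray (T : ℝ) (u₀ : E3 → E3) (u : ℝ → E3 → E3) : Prop :=
  ∃ (p : ℝ → E3 → ℝ) (g : ℝ → Fin 3 → E3 → E3) (μ : Measure (ℝ × E3)),
    (∀ t ∈ Ioo (0:ℝ) T, AEStronglyMeasurable (u t) volume) ∧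
    (∀ t ∈ Ioo (0:ℝ) T, IsWeakGradient (u t) (g t)) ∧
    SpaceDivFree T u ∧
    NSWeakPDE T u p ∧
    (∀ t ∈ Ioo (0:ℝ) T,
      (∫⁻ x, (‖u t x‖₊ : ℝ≥0∞) ^ 2)
          + 2 * ∫⁻ s in Ioo (0:ℝ) t, ∫⁻ x, ∑ j, (‖g s j x‖₊ : ℝ≥0∞) ^ 2
        ≤ ∫⁻ x, (‖u₀ x‖₊ : ℝ≥0∞) ^ 2) ∧
    Tendsto (fun t => eLpNorm (fun x => u t x - u₀ x) 2 volume) (𝓝[>] (0:ℝ)) (𝓝 0) ∧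
    IsLocallyFiniteMeasure μ ∧
    μ ((Ioo (0:ℝ) T ×ˢ (univ : Set E3))ᶜ) = 0 ∧
    (∀ φ : ℝ × E3 → ℝ, IsTestST T φ →
      (∫ t in Ioo (0:ℝ) T, ∫ x,
        (‖u t x‖^2 * (pdt φ (t, x) + lapx φ (t, x))
          + (2 * p t x + ‖u t x‖^2) * ∑ j, u t x j * pdx j φ (t, x)
          - 2 * (∑ j, ‖g t j x‖^2) * φ (t, x))) = ∫ q, φ q ∂μ)

/-! ### Weights -/

/-- The weight `(1+|x|)^{-N}`. -/
def wR (N : ℝ) (x : E3) : ℝ := (1 + ‖x‖) ^ (-N)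

/-- The weighted measure `(1+|x|)^{-N} dx`. -/
def muW (N : ℝ) : Measure E3 := volume.withDensity fun x => ENNReal.ofReal (wR N x)

/-- Weighted Leray weak solution of the Navier–Stokes equations with weight
`w = (1+|x|)^{-N}`. -/
def IsWeightedLeray (N T : ℝ) (u₀ : E3 → E3) (u : ℝ → E3 → E3) : Prop :=
  ∃ (p : ℝ → E3 → ℝ) (g : ℝ → Fin 3 → E3 → E3),
    (∀ t ∈ Ioo (0:ℝ) T, AEStronglyMeasurable (u t) volume) ∧
    (∀ t ∈ Ioo (0:ℝ) T, IsWeakGradient (u t) (g t)) ∧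
    (∃ M : ℝ≥0∞, M < ∞ ∧ ∀ t ∈ Ioo (0:ℝ) T, (∫⁻ x, (‖u t x‖₊ : ℝ≥0∞) ^ 2 ∂(muW N)) ≤ M) ∧
    (∫⁻ t in Ioo (0:ℝ) T, ∫⁻ x, ∑ j, (‖g t j x‖₊ : ℝ≥0∞) ^ 2 ∂(muW N)) < ∞ ∧
    SpaceDivFree T u ∧
    NSWeakPDE T u p ∧
    Tendsto (fun t => eLpNorm (fun x => u t x - u₀ x) 2 (muW N)) (𝓝[>] (0:ℝ)) (𝓝 0) ∧
    (∀ t ∈ Ioo (0:ℝ) T,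
      (∫ x, wR N x * ‖u t x‖^2)
          + 2 * ∫ s in Ioo (0:ℝ) t, ∫ x, wR N x * ∑ j, ‖g s j x‖^2
        ≤ (∫ x, wR N x * ‖u₀ x‖^2)
          - 2 * ∫ s in Ioo (0:ℝ) t, ∫ x, ∑ j,
              gradient (wR N) x j * (inner ℝ (u s x) (g s j x) : ℝ)
          + ∫ s in Ioo (0:ℝ) t, ∫ x,
              (‖u s x‖^2 + 2 * p s x) * (inner ℝ (u s x) (gradient (wR N) x) : ℝ))

/-! ### Stable spaces -/

/-- A suitable convolution kernel: integrable, nonnegative, radial and radially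
non-increasing. -/
def IsSuitableKernel (K : E3 → ℝ) : Prop :=
  Integrable K volume ∧ (∀ x, 0 ≤ K x) ∧ ∀ x y : E3, ‖x‖ ≤ ‖y‖ → K y ≤ K x

/-- `g` is dominated (a.e.) by a suitable kernel of integral at most `M`
(i.e. `g ∈ 𝕂` with `‖g‖_𝕂 ≤ M`). -/
def KDominated (g : E3 → ℝ) (M : ℝ) : Prop :=
  ∃ K, IsSuitableKernel K ∧ (∀ᵐ x ∂volume, |g x| ≤ K x) ∧ (∫ x, K x) ≤ M

/-- A stable space of measurable functions on `ℝ³`: a Banach space of locally integrable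
functions, stable under multiplication by `L^∞` functions and under convolution with
elements of the convolutor space `𝕂`. -/
structure StableSpace where
  /-- membership predicate -/
  Mem : (E3 → ℝ) → Prop
  /-- the norm -/
  nrm : (E3 → ℝ) → ℝ
  mem_locInt : ∀ f, Mem f → LocallyIntegrable f volume
  zero_mem : Mem 0
  add_mem : ∀ (f g : E3 → ℝ), Mem f → Mem g → Mem (f + g)
  smul_mem : ∀ (c : ℝ) f, Mem f → Mem (c • f)
  nrm_nonneg : ∀ f, 0 ≤ nrm f
  nrm_zero : nrm 0 = 0
  nrm_add : ∀ (f g : E3 → ℝ), Mem f → Mem g → nrm (f + g) ≤ nrm f + nrm g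
  nrm_smul : ∀ (c : ℝ) f, nrm (c • f) = |c| * nrm f
  nrm_eq_zero : ∀ f, Mem f → nrm f = 0 → f =ᵐ[volume] 0
  complete' : ∀ F : ℕ → (E3 → ℝ), (∀ n, Mem (F n)) →
    (∀ ε : ℝ, 0 < ε → ∃ N, ∀ m n, N ≤ m → N ≤ n → nrm (F m - F n) ≤ ε) →
    ∃ g, Mem g ∧ Tendsto (fun n => nrm (F n - g)) atTop (𝓝 0)
  /-- the stability constant -/
  Cst : ℝ
  mul_bound : ∀ (f g : E3 → ℝ) (M : ℝ), Mem f → (∀ᵐ x ∂volume, |g x| ≤ M) →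
    Mem (fun x => f x * g x) ∧ nrm (fun x => f x * g x) ≤ Cst * nrm f * M
  conv_bound : ∀ (f g : E3 → ℝ) (M : ℝ), Mem f → KDominated g M →
    Mem (fun x => ∫ y, f (x - y) * g y) ∧
      nrm (fun x => ∫ y, f (x - y) * g y) ≤ Cst * nrm f * M

/-- Extended-real-valued norm of a stable space (`∞` off the space). -/
def StableSpace.eNrm (E : StableSpace) (f : E3 → ℝ) : ℝ≥0∞ :=
  if E.Mem f then ENNReal.ofReal (E.nrm f) else ∞

/-- Membership of a vector field (through its modulus). -/
def StableSpace.MemV (E : StableSpace) (u : E3 → E3) : Prop := E.Mem fun x => ‖u x‖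

/-- Extended norm of a vector field in a stable space (through its modulus). -/
def StableSpace.eNrmV (E : StableSpace) (u : E3 → E3) : ℝ≥0∞ := E.eNrm fun x => ‖u x‖

/-- The norm of `t ↦ t^{s/2} g(t)` in `L^q((0,T), dt/t)`. -/
def timeLqNorm (s : ℝ) (q : ℝ≥0∞) (T : ℝ) (g : ℝ → ℝ≥0∞) : ℝ≥0∞ :=
  if q = ∞ then ⨆ t ∈ Ioo (0:ℝ) T, ENNReal.ofReal (t ^ (s/2)) * g t
  else (∫⁻ t in Ioo (0:ℝ) T,
      (ENNReal.ofReal (t ^ (s/2)) * g t) ^ q.toReal * ENNReal.ofReal t⁻¹) ^ (1 / q.toReal)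

/-- The Besov norm `‖f‖_{B^{-s}_{E,q}}` built on a stable space `E`
(computed over the time interval `(0,T)`). -/
def besovE (E : StableSpace) (s : ℝ) (q : ℝ≥0∞) (T : ℝ) (f : E3 → ℝ) : ℝ≥0∞ :=
  timeLqNorm s q T fun t => E.eNrm (heat t f)

/-- Besov norm of a vector field built on a stable space. -/
def besovEV (E : StableSpace) (s : ℝ) (q : ℝ≥0∞) (T : ℝ) (u₀ : E3 → E3) : ℝ≥0∞ :=
  timeLqNorm s q T fun t => E.eNrmV (heat t u₀)

/-- Morrey norm `‖f‖_{M^{p,q}}` (radii `0 < r ≤ 1`). -/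
def morreyNorm {F : Type*} [NormedAddCommGroup F] (p q : ℝ) (f : E3 → F) : ℝ≥0∞ :=
  ⨆ (x₀ : E3) (r : ℝ) (_ : r ∈ Ioc (0:ℝ) 1),
    ENNReal.ofReal (r ^ (3/q - 3/p)) *
      (∫⁻ x in ball x₀ r, (‖f x‖₊ : ℝ≥0∞) ^ p) ^ (1/p)

/-- Homogeneous Morrey norm `‖f‖_{Ṁ^{p,q}}` (all radii `r > 0`). -/
def morreyHomNorm {F : Type*} [NormedAddCommGroup F] (p q : ℝ) (f : E3 → F) : ℝ≥0∞ :=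
  ⨆ (x₀ : E3) (r : ℝ) (_ : 0 < r),
    ENNReal.ofReal (r ^ (3/q - 3/p)) *
      (∫⁻ x in ball x₀ r, (‖f x‖₊ : ℝ≥0∞) ^ p) ^ (1/p)

/-- An `r`-stable space: a stable space continuously embedded in `B^{-3/r}_{∞,∞}` and in
`L²_loc`, for which pointwise products map `E × E` into `B^{-3/r}_{E,∞}`. -/
structure RStable (r : ℝ) extends StableSpace where
  /-- the embedding/product constant -/
  Cr : ℝ
  emb_besov : ∀ f, Mem f → ∀ t ∈ Ioo (0:ℝ) 1,
    ENNReal.ofReal (t ^ (3/(2*r))) * (⨆ x : E3, (‖heat t f x‖₊ : ℝ≥0∞))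
      ≤ ENNReal.ofReal (Cr * nrm f)
  emb_L2loc : ∀ f, Mem f → ∀ (x₀ : E3) (R : ℝ),
    (∫⁻ x in ball x₀ R, (‖f x‖₊ : ℝ≥0∞) ^ 2) < ∞
  prod_bound : ∀ (f g : E3 → ℝ), Mem f → Mem g →
    besovE toStableSpace (3/r) ∞ 1 (fun x => f x * g x)
      ≤ ENNReal.ofReal (Cr * nrm f * nrm g)

/-! ### Bessel potentials and potential spaces -/

/-- The Bessel potential `(Id−Δ)^{-a}` (for `a > 0`), via the subordination formula
`(Id−Δ)^{-a} = Γ(a)⁻¹ ∫₀^∞ e^{-t} t^{a-1} e^{tΔ} dt`; by convention the identity for `a = 0`. -/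
def besselNeg {F : Type*} [NormedAddCommGroup F] [NormedSpace ℝ F] (a : ℝ) (f : E3 → F) :
    E3 → F :=
  if a = 0 then f
  else fun x => (Real.Gamma a)⁻¹ • ∫ t in Ioi (0:ℝ), (Real.exp (-t) * t ^ (a - 1)) • heat t f x

/-- The norm of the potential space `H^{-γ}_r = (Id−Δ)^{γ/2} L^r`:
`‖f‖ = ‖(Id−Δ)^{-γ/2} f‖_r`. -/
def sobNegNorm {F : Type*} [NormedAddCommGroup F] [NormedSpace ℝ F] (γ r : ℝ) (f : E3 → F) :
    ℝ≥0∞ :=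
  eLpNorm (besselNeg (γ/2) f) (ENNReal.ofReal r) volume

/-- The norm of the potential space `H^{-s}_E = (Id−Δ)^{s/2}E` built on a stable space. -/
def potE (E : StableSpace) (s : ℝ) (f : E3 → ℝ) : ℝ≥0∞ := E.eNrm (besselNeg (s/2) f)

/-- The norm of the potential space `(Id−Δ)^{-s} L^p(μ)` for `s` of arbitrary sign. -/
def potLpNorm (s p : ℝ) (μ : Measure E3) (f : E3 → ℂ) : ℝ≥0∞ :=
  if s ≤ 0 then eLpNorm (besselNeg (-s) f) (ENNReal.ofReal p) μ
  else ⨅ (g : E3 → ℂ) (_ : f = besselNeg s g), eLpNorm g (ENNReal.ofReal p) μ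

/-- Classical Besov norm `‖f‖_{B^{-s}_{q,∞}}` with respect to a measure `μ`:
`sup_{0<t<1} t^{s/2} ‖e^{tΔ}f‖_{L^q(μ)}`. -/
def besovLp {F : Type*} [NormedAddCommGroup F] [NormedSpace ℝ F]
    (s : ℝ) (q : ℝ≥0∞) (μ : Measure E3) (f : E3 → F) : ℝ≥0∞ :=
  ⨆ t ∈ Ioo (0:ℝ) 1, ENNReal.ofReal (t ^ (s/2)) * eLpNorm (heat t f) q μ

/-! ### Real interpolation -/

/-- The `K`-functional of the real interpolation method, for two extended-real-valued
norms on functions. -/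
def kFunc {α F : Type*} [AddCommGroup F] (N₀ N₁ : (α → F) → ℝ≥0∞) (t : ℝ) (f : α → F) :
    ℝ≥0∞ :=
  ⨅ g : α → F, N₀ g + ENNReal.ofReal t * N₁ (fun x => f x - g x)

/-- The norm of the real interpolation space `[A₀,A₁]_{θ,∞}` (K-method). -/
def realInterpNorm {α F : Type*} [AddCommGroup F] (θ : ℝ) (N₀ N₁ : (α → F) → ℝ≥0∞)
    (f : α → F) : ℝ≥0∞ :=
  ⨆ (t : ℝ) (_ : 0 < t), ENNReal.ofReal (t ^ (-θ)) * kFunc N₀ N₁ t f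

/-! ### Complex interpolation (Calderón's functors) -/

/-- The norm of the sum space `A₀ + A₁`. -/
def sumENorm {α : Type*} (N₀ N₁ : (α → ℂ) → ℝ≥0∞) (f : α → ℂ) : ℝ≥0∞ :=
  ⨅ g : α → ℂ, N₀ g + N₁ (fun x => f x - g x)

/-- The open strip `0 < Re z < 1`. -/
def stripO : Set ℂ := {z | z.re ∈ Ioo (0:ℝ) 1}

/-- The closed strip `0 ≤ Re z ≤ 1`. -/
def stripC : Set ℂ := {z | z.re ∈ Icc (0:ℝ) 1}

/-- Analyticity of `F` from the open strip into the sum space `A₀+A₁`. -/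
def StripAnalytic {α : Type*} (N₀ N₁ : (α → ℂ) → ℝ≥0∞) (F : ℂ → α → ℂ) : Prop :=
  ∀ z ∈ stripO, ∃ F' : α → ℂ,
    Tendsto (fun w => sumENorm N₀ N₁ (fun x => (w - z)⁻¹ * (F w x - F z x) - F' x))
      (𝓝[stripO \ {z}] z) (𝓝 0)

/-- An admissible family for Calderón's first complex interpolation functor. -/
structure IsCalderonFamily {α : Type*} (N₀ N₁ : (α → ℂ) → ℝ≥0∞) (F : ℂ → α → ℂ) :
    Prop where
  bounded : ∃ M : ℝ, ∀ z ∈ stripC, sumENorm N₀ N₁ (F z) ≤ ENNReal.ofReal M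
  contOnStrip : ∀ z ∈ stripC,
    Tendsto (fun w => sumENorm N₀ N₁ (fun x => F w x - F z x)) (𝓝[stripC] z) (𝓝 0)
  analytic : StripAnalytic N₀ N₁ F
  mem₀ : ∀ t : ℝ, N₀ (F (Complex.I * t)) < ∞
  cont₀ : ∀ t : ℝ,
    Tendsto (fun t' : ℝ => N₀ (fun x => F (Complex.I * t') x - F (Complex.I * t) x))
      (𝓝 t) (𝓝 0)
  vanish₀ : Tendsto (fun t : ℝ => N₀ (F (Complex.I * t))) (cocompact ℝ) (𝓝 0)
  mem₁ : ∀ t : ℝ, N₁ (F (1 + Complex.I * t)) < ∞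
  cont₁ : ∀ t : ℝ,
    Tendsto (fun t' : ℝ => N₁ (fun x => F (1 + Complex.I * t') x - F (1 + Complex.I * t) x))
      (𝓝 t) (𝓝 0)
  vanish₁ : Tendsto (fun t : ℝ => N₁ (F (1 + Complex.I * t))) (cocompact ℝ) (𝓝 0)

/-- The norm of Calderón's first complex interpolation space `[A₀,A₁]_θ`. -/
def calderon1Norm {α : Type*} (N₀ N₁ : (α → ℂ) → ℝ≥0∞) (θ : ℝ) (f : α → ℂ) : ℝ≥0∞ :=
  ⨅ (F : ℂ → α → ℂ) (_ : IsCalderonFamily N₀ N₁ F) (_ : F (θ : ℂ) = f),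
    max (⨆ t : ℝ, N₀ (F (Complex.I * t))) (⨆ t : ℝ, N₁ (F (1 + Complex.I * t)))

/-- An admissible family for Calderón's second complex interpolation functor. -/
structure IsCalderon2Family {α : Type*} (N₀ N₁ : (α → ℂ) → ℝ≥0∞) (G : ℂ → α → ℂ) :
    Prop where
  bounded : ∃ M : ℝ, ∀ z ∈ stripC,
    sumENorm N₀ N₁ (G z) ≤ ENNReal.ofReal (M * (1 + ‖z‖))
  contOnStrip : ∀ z ∈ stripC,
    Tendsto (fun w => sumENorm N₀ N₁ (fun x => G w x - G z x)) (𝓝[stripC] z) (𝓝 0)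
  analytic : StripAnalytic N₀ N₁ G
  lip₀ : ∃ L : ℝ, ∀ t₁ t₂ : ℝ,
    N₀ (fun x => G (Complex.I * t₂) x - G (Complex.I * t₁) x) ≤ ENNReal.ofReal (L * |t₂ - t₁|)
  lip₁ : ∃ L : ℝ, ∀ t₁ t₂ : ℝ,
    N₁ (fun x => G (1 + Complex.I * t₂) x - G (1 + Complex.I * t₁) x)
      ≤ ENNReal.ofReal (L * |t₂ - t₁|)

/-- `f` is the derivative `G'(θ)` in the sum space. -/
def HasStripDerivAt {α : Type*} (N₀ N₁ : (α → ℂ) → ℝ≥0∞) (G : ℂ → α → ℂ) (θ : ℝ)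
    (f : α → ℂ) : Prop :=
  Tendsto (fun w => sumENorm N₀ N₁ (fun x => (w - (θ:ℂ))⁻¹ * (G w x - G (θ:ℂ) x) - f x))
    (𝓝[stripO \ {(θ:ℂ)}] (θ:ℂ)) (𝓝 0)

/-- The norm of Calderón's second (upper) complex interpolation space `[A₀,A₁]^θ`. -/
def calderon2Norm {α : Type*} (N₀ N₁ : (α → ℂ) → ℝ≥0∞) (θ : ℝ) (f : α → ℂ) : ℝ≥0∞ :=
  ⨅ (G : ℂ → α → ℂ) (_ : IsCalderon2Family N₀ N₁ G) (_ : HasStripDerivAt N₀ N₁ G θ f),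
    max
      (⨆ (t₁ : ℝ) (t₂ : ℝ),
        N₀ (fun x => G (Complex.I * t₂) x - G (Complex.I * t₁) x) / ENNReal.ofReal |t₂ - t₁|)
      (⨆ (t₁ : ℝ) (t₂ : ℝ),
        N₁ (fun x => G (1 + Complex.I * t₂) x - G (1 + Complex.I * t₁) x)
          / ENNReal.ofReal |t₂ - t₁|)

/-- The Muckenhoupt class `𝒜_p`. -/
def IsMuckenhoupt (p : ℝ) (w : E3 → ℝ) : Prop :=
  Measurable w ∧ (∀ x, 0 < w x) ∧
    ∃ C : ℝ, ∀ (x₀ : E3) (R : ℝ), 0 < R →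
      (((volume (ball x₀ R)).toReal)⁻¹ * ∫ x in ball x₀ R, w x) *
        ((((volume (ball x₀ R)).toReal)⁻¹ * ∫ x in ball x₀ R, w x ^ (-(1:ℝ)/(p-1))) ^ (p-1))
      ≤ C


-- basic kernel facts
lemma hk_pos {t : ℝ} (ht : 0 < t) (x : E3) : 0 < heatKernel t x := by
  unfold heatKernel
  have := Real.pi_pos
  positivity

lemma hk_le {t : ℝ} (ht : 0 < t) (x : E3) :
    heatKernel t x ≤ (4 * Real.pi * t) ^ (-(3:ℝ)/2) := by
  unfold heatKernel
  have h1 : Real.exp (-‖x‖^2 / (4*t)) ≤ 1 := by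
    rw [Real.exp_le_one_iff, neg_div]
    have : (0:ℝ) ≤ ‖x‖^2 / (4*t) := by positivity
    linarith
  have h2 : (0:ℝ) < (4 * Real.pi * t) ^ (-(3:ℝ)/2) := by
    have := Real.pi_pos; positivity
  nlinarith

lemma hk_ge {t a : ℝ} (ht : 0 < t) (x : E3) (hx : ‖x‖ ≤ a) :
    (4 * Real.pi * t) ^ (-(3:ℝ)/2) * Real.exp (-a^2 / (4*t)) ≤ heatKernel t x := by
  unfold heatKernel
  have h2 : (0:ℝ) < (4 * Real.pi * t) ^ (-(3:ℝ)/2) := by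
    have := Real.pi_pos; positivity
  have h3 : Real.exp (-a^2 / (4*t)) ≤ Real.exp (-‖x‖^2 / (4*t)) := by
    apply Real.exp_le_exp.2
    have hx2 : ‖x‖^2 ≤ a^2 := by nlinarith [norm_nonneg x]
    have h4 : (0:ℝ) < 4*t := by linarith
    rw [div_le_div_iff₀ h4 h4]
    nlinarith
  nlinarith

lemma hk_cont {t : ℝ} (ht : 0 < t) : Continuous (heatKernel t) := by
  unfold heatKernel
  fun_prop

lemma hk_integrable {t : ℝ} (ht : 0 < t) : Integrable (heatKernel t) (volume : Measure E3) := by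
  have hb : (0:ℝ) < 1/(4*t) := by positivity
  have h1 : Integrable (fun v : E3 => Complex.exp (-(((1/(4*t):ℝ)):ℂ) * ‖v‖^2 +
      (0:ℂ) * (inner ℝ (0:E3) v : ℝ))) volume :=
    GaussianFourier.integrable_cexp_neg_mul_sq_norm_add (by simpa using hb) 0 0
  have h2 : Integrable (fun v : E3 => Real.exp (-(1/(4*t)) * ‖v‖^2)) volume := by
    have := h1.norm
    refine this.congr ?_
    filter_upwards with v
    simp only [zero_mul, add_zero]
    rw [Complex.norm_exp]
    congr 1
    have h9 : (-(((1/(4*t):ℝ)):ℂ) * (‖v‖:ℂ)^2) = (((-(1/(4*t)) * ‖v‖^2 : ℝ)):ℂ) := by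
      push_cast; ring
    rw [h9, Complex.ofReal_re]
  have h3 := h2.const_mul ((4 * Real.pi * t) ^ (-(3:ℝ)/2))
  refine h3.congr ?_
  filter_upwards with v
  unfold heatKernel
  congr 1
  ring_nf

open scoped Convolution in
lemma heat_cont {t : ℝ} (ht : 0 < t) {g : E3 → ℝ} (hg : Integrable g volume) :
    Continuous (heat t g) := by
  have hb : BddAbove (range fun x : E3 => ‖heatKernel t x‖) := by
    refine ⟨(4 * Real.pi * t) ^ (-(3:ℝ)/2), ?_⟩
    rintro _ ⟨x, rfl⟩
    show ‖heatKernel t x‖ ≤ _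
    rw [Real.norm_eq_abs, abs_of_nonneg (hk_pos ht x).le]
    exact hk_le ht x
  have hc : Continuous (g ⋆[ContinuousLinearMap.mul ℝ ℝ] heatKernel t) :=
    hb.continuous_convolution_right_of_integrable (ContinuousLinearMap.mul ℝ ℝ) hg (hk_cont ht)
  have heq : heat t g = g ⋆[ContinuousLinearMap.mul ℝ ℝ] heatKernel t := by
    funext x
    rw [convolution_def]
    refine integral_congr_ae (Eventually.of_forall fun y => ?_)
    simp [mul_comm]
  rw [heq]; exact hc


def kconst : ℝ :=
  (2*Real.pi) ^ (-(3:ℝ)) * Real.exp (-(5:ℝ)/2) * (volume (ball (0:E3) 1)).toReal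

lemma kconst_pos : 0 < kconst := by
  have hv : 0 < (volume (ball (0:E3) 1)).toReal :=
    ENNReal.toReal_pos (measure_ball_pos volume 0 one_pos).ne' measure_ball_lt_top.ne
  have := Real.pi_pos
  have h1 : (0:ℝ) < (2*Real.pi) ^ (-(3:ℝ)) := Real.rpow_pos_of_pos (by linarith) _
  exact mul_pos (mul_pos h1 (Real.exp_pos _)) hv

def morreyC (r : ℝ) (E : RStable r) : ℝ :=
  (2 ^ ((3:ℝ)/2) * kconst⁻¹) ^ ((1:ℝ)/2) * max E.Cr 0 * E.toStableSpace.Cst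

set_option maxHeartbeats 1000000 in
lemma morrey_key (r : ℝ) (hr : 2 < r) (E : RStable r) (f : E3 → ℝ)
    (hf : E.toStableSpace.Mem f) (x₀ : E3) (ρ : ℝ) (hρ0 : 0 < ρ) (hρ1 : ρ ≤ 1) :
    ENNReal.ofReal (ρ ^ (3/r - 3/2)) *
        (∫⁻ x in ball x₀ ρ, (‖f x‖₊ : ℝ≥0∞) ^ (2:ℝ)) ^ ((1:ℝ)/2)
      ≤ ENNReal.ofReal (morreyC r E * E.toStableSpace.nrm f) := by
  have hr0 : (0:ℝ) < r := by linarith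
  set t : ℝ := ρ^2/2 with ht_def
  have ht0 : 0 < t := by positivity
  have htmem : t ∈ Ioo (0:ℝ) 1 := ⟨ht0, by nlinarith⟩
  -- truncation
  set χ : E3 → ℝ := (ball x₀ ρ).indicator (fun _ => (1:ℝ)) with hχ_def
  obtain ⟨hBmem, hBnrm⟩ := E.toStableSpace.mul_bound f χ 1 hf (Eventually.of_forall (fun x => by
    by_cases hx : x ∈ ball x₀ ρ <;>
      simp [hχ_def, Set.indicator_apply, hx]))
  set fB : E3 → ℝ := fun x => f x * χ x with hfB_def
  rw [mul_one] at hBnrm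
  set nB : ℝ := E.toStableSpace.nrm fB with hnB_def
  have hnB0 : 0 ≤ nB := E.toStableSpace.nrm_nonneg _
  set g : E3 → ℝ := fun x => fB x * fB x with hg_def
  have hg_indicator : g = (ball x₀ ρ).indicator (fun x => f x ^ 2) := by
    funext x
    by_cases hx : x ∈ ball x₀ ρ
    · simp only [hg_def, hfB_def, hχ_def, Set.indicator_of_mem hx]
      ring
    · simp only [hg_def, hfB_def, hχ_def, Set.indicator_of_notMem hx]
      ring
  have hg_nonneg : ∀ x, 0 ≤ g x := fun x => mul_self_nonneg _
  have hf_meas : AEStronglyMeasurable f volume :=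
    (E.toStableSpace.mem_locInt f hf).aestronglyMeasurable
  have hL2 : (∫⁻ x in ball x₀ ρ, (‖f x‖₊ : ℝ≥0∞) ^ (2:ℕ)) < ∞ := E.emb_L2loc f hf x₀ ρ
  -- g is integrable
  have hsq_meas : AEStronglyMeasurable (fun x => f x ^ 2) volume :=
    (hf_meas.mul hf_meas).congr (Eventually.of_forall fun x => (pow_two (f x)).symm)
  have hq_int : IntegrableOn (fun x => f x ^ 2) (ball x₀ ρ) volume := by
    refine ⟨hsq_meas.restrict, ?_⟩
    unfold HasFiniteIntegral
    calc ∫⁻ x in ball x₀ ρ, (‖f x ^ 2‖₊ : ℝ≥0∞)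
        = ∫⁻ x in ball x₀ ρ, (‖f x‖₊ : ℝ≥0∞) ^ (2:ℕ) := by
          refine lintegral_congr fun x => ?_
          rw [← ENNReal.coe_pow, nnnorm_pow]
      _ < ∞ := hL2
  have hg_int : Integrable g volume := by
    rw [hg_indicator]
    exact (integrable_indicator_iff measurableSet_ball).2 hq_int
  set J : ℝ := ∫ x, g x with hJ_def
  have hJ0 : 0 ≤ J := integral_nonneg hg_nonneg
  -- the lintegral equals ofReal J
  have hsq_ofReal : ∀ a : ℝ, (‖a‖₊ : ℝ≥0∞) ^ (2:ℝ) = ENNReal.ofReal (a ^ 2) := by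
    intro a
    rw [← enorm_eq_nnnorm, Real.enorm_eq_ofReal_abs,
      ENNReal.ofReal_rpow_of_nonneg (abs_nonneg _) (by norm_num : (0:ℝ) ≤ 2)]
    congr 1
    rw [show (2:ℝ) = ((2:ℕ):ℝ) by norm_num, Real.rpow_natCast, sq_abs]
  have hLJ : (∫⁻ x in ball x₀ ρ, (‖f x‖₊ : ℝ≥0∞) ^ (2:ℝ)) = ENNReal.ofReal J := by
    have h1 : J = ∫ x in ball x₀ ρ, f x ^ 2 := by
      rw [hJ_def, hg_indicator, integral_indicator measurableSet_ball]
    rw [h1, ofReal_integral_eq_lintegral_ofReal hq_int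
      (Eventually.of_forall fun x => sq_nonneg _)]
    exact lintegral_congr fun x => hsq_ofReal (f x)
  -- kernel constants
  set cT : ℝ := (4*Real.pi*t) ^ (-(3:ℝ)/2) with hcT_def
  have hcT0 : 0 < cT := by
    have := Real.pi_pos
    exact Real.rpow_pos_of_pos (by nlinarith) _
  set κ₁ : ℝ := cT * Real.exp (-(2*ρ)^2 / (4*t)) with hκ₁_def
  set κ₂ : ℝ := cT * Real.exp (-ρ^2 / (4*t)) with hκ₂_def
  have hκ₁0 : 0 < κ₁ := mul_pos hcT0 (Real.exp_pos _)
  have hκ₂0 : 0 < κ₂ := mul_pos hcT0 (Real.exp_pos _)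
  -- pointwise facts about h := heat t g
  have hsmul : ∀ (w : E3 → ℝ) (x : E3), heat t w x = ∫ y, heatKernel t (x - y) * w y := by
    intro w x
    simp only [heat, smul_eq_mul]
  have hWg : ∀ x : E3, Integrable (fun y => heatKernel t (x - y) * g y) volume := by
    intro x
    refine hg_int.bdd_mul (c := cT) ?_ (Eventually.of_forall fun y => ?_)
    · exact ((hk_cont ht0).comp (continuous_const.sub continuous_id)).aestronglyMeasurable
    · rw [Real.norm_eq_abs, abs_of_nonneg (hk_pos ht0 _).le]
      exact hk_le ht0 _
  have hh_nonneg : ∀ x, 0 ≤ heat t g x := by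
    intro x
    rw [hsmul]
    exact integral_nonneg fun y => mul_nonneg (hk_pos ht0 _).le (hg_nonneg y)
  have hh_bdd : ∀ x, heat t g x ≤ cT * J := by
    intro x
    rw [hsmul]
    calc (∫ y, heatKernel t (x - y) * g y) ≤ ∫ y, cT * g y := by
          refine integral_mono (hWg x) (hg_int.const_mul cT) fun y => ?_
          exact mul_le_mul_of_nonneg_right (hk_le ht0 _) (hg_nonneg y)
      _ = cT * J := by rw [integral_const_mul, hJ_def]
  have hh_meas : AEStronglyMeasurable (heat t g) volume :=
    (heat_cont ht0 hg_int).aestronglyMeasurable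
  -- step 1 : lower bound for h on the ball
  have hstep1 : ∀ x ∈ ball x₀ ρ, κ₁ * J ≤ heat t g x := by
    intro x hx
    rw [hsmul]
    have hmono : ∀ y, κ₁ * g y ≤ heatKernel t (x - y) * g y := by
      intro y
      by_cases hy : y ∈ ball x₀ ρ
      · refine mul_le_mul_of_nonneg_right ?_ (hg_nonneg y)
        rw [hκ₁_def]
        refine hk_ge ht0 _ ?_
        have h1 : dist x x₀ < ρ := mem_ball.mp hx
        have h2 : dist x₀ y < ρ := by rw [dist_comm]; exact mem_ball.mp hy
        calc ‖x - y‖ = dist x y := (dist_eq_norm x y).symm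
          _ ≤ dist x x₀ + dist x₀ y := dist_triangle x x₀ y
          _ ≤ 2*ρ := by linarith
      · have hzero : g y = 0 := by rw [hg_indicator]; exact indicator_of_notMem hy _
        rw [hzero, mul_zero, mul_zero]
    calc κ₁ * J = ∫ y, κ₁ * g y := by rw [integral_const_mul, hJ_def]
      _ ≤ ∫ y, heatKernel t (x - y) * g y :=
          integral_mono (hg_int.const_mul κ₁) (hWg x) hmono
  -- step 2 : lower bound for the iterated heat extension at x₀
  set X : ℝ := heat t (heat t g) x₀ with hX_def
  have hstep2 : (volume (ball x₀ ρ)).toReal * (κ₂ * (κ₁ * J)) ≤ X := by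
    have hWint : Integrable (fun x => heatKernel t (x₀ - x)) volume :=
      (hk_integrable ht0).comp_sub_left x₀
    have hRint : Integrable (fun x => heatKernel t (x₀ - x) * heat t g x) volume := by
      have h1 := hWint.bdd_mul (c := cT * J) hh_meas (Eventually.of_forall fun x => by
        rw [Real.norm_eq_abs, abs_of_nonneg (hh_nonneg x)]; exact hh_bdd x)
      exact h1.congr (Eventually.of_forall fun x => mul_comm _ _)
    have hind : Integrable ((ball x₀ ρ).indicator (fun _ => κ₂ * (κ₁ * J))) volume :=
      (integrable_indicator_iff measurableSet_ball).2
        (integrableOn_const measure_ball_lt_top.ne)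
    have hmono : ∀ x, (ball x₀ ρ).indicator (fun _ => κ₂ * (κ₁ * J)) x
        ≤ heatKernel t (x₀ - x) * heat t g x := by
      intro x
      by_cases hx : x ∈ ball x₀ ρ
      · rw [indicator_of_mem hx]
        have hW : κ₂ ≤ heatKernel t (x₀ - x) := by
          rw [hκ₂_def]
          refine hk_ge ht0 _ ?_
          calc ‖x₀ - x‖ = dist x₀ x := (dist_eq_norm x₀ x).symm
            _ = dist x x₀ := dist_comm x₀ x
            _ ≤ ρ := (mem_ball.mp hx).le
        have h1 : κ₁ * J ≤ heat t g x := hstep1 x hx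
        exact mul_le_mul hW h1 (mul_nonneg hκ₁0.le hJ0) (hκ₂0.le.trans hW)
      · rw [indicator_of_notMem hx]
        exact mul_nonneg (hk_pos ht0 _).le (hh_nonneg x)
    calc (volume (ball x₀ ρ)).toReal * (κ₂ * (κ₁ * J))
        = ∫ x, (ball x₀ ρ).indicator (fun _ => κ₂ * (κ₁ * J)) x := by
          rw [integral_indicator measurableSet_ball, setIntegral_const, smul_eq_mul, measureReal_def]
      _ ≤ ∫ x, heatKernel t (x₀ - x) * heat t g x := integral_mono hind hRint hmono
      _ = X := by rw [hX_def, hsmul]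
  -- upper bound via r-stability
  set C₁ : ℝ := max E.Cr 0 with hC₁_def
  have hC₁0 : 0 ≤ C₁ := le_max_right _ _
  have hCr_le : E.Cr ≤ C₁ := le_max_left _ _
  have hprod := E.prod_bound fB fB hBmem hBmem
  rw [← hg_def] at hprod
  unfold besovE timeLqNorm at hprod
  rw [if_pos rfl] at hprod
  have hsup_le : ENNReal.ofReal (t ^ (3/r/2)) * E.toStableSpace.eNrm (heat t g)
      ≤ ENNReal.ofReal (E.Cr * nB * nB) :=
    le_trans (le_iSup₂ (f := fun (s : ℝ) (_ : s ∈ Ioo (0:ℝ) 1) =>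
      ENNReal.ofReal (s ^ (3/r/2)) * E.toStableSpace.eNrm (heat s g)) t htmem) hprod
  have htpow_pos : ∀ e : ℝ, 0 < t ^ e := fun e => Real.rpow_pos_of_pos ht0 e
  have hMemh : E.toStableSpace.Mem (heat t g) := by
    by_contra hnot
    have heq : E.toStableSpace.eNrm (heat t g) = ∞ := by
      unfold StableSpace.eNrm
      rw [if_neg hnot]
    rw [heq, ENNReal.mul_top (by
      simp only [ne_eq, ENNReal.ofReal_eq_zero, not_le]
      exact htpow_pos _)] at hsup_le
    exact absurd (top_le_iff.1 hsup_le) ENNReal.ofReal_ne_top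
  have heNrm : E.toStableSpace.eNrm (heat t g)
      = ENNReal.ofReal (E.toStableSpace.nrm (heat t g)) := by
    unfold StableSpace.eNrm
    rw [if_pos hMemh]
  set nh : ℝ := E.toStableSpace.nrm (heat t g) with hnh_def
  have hnh0 : 0 ≤ nh := E.toStableSpace.nrm_nonneg _
  have hu2 : t ^ (3/r/2) * nh ≤ C₁ * nB^2 := by
    rw [heNrm, ← ENNReal.ofReal_mul (htpow_pos _).le] at hsup_le
    have h2 : ENNReal.ofReal (E.Cr * nB * nB) ≤ ENNReal.ofReal (C₁ * nB^2) := by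
      apply ENNReal.ofReal_le_ofReal
      nlinarith
    exact (ENNReal.ofReal_le_ofReal_iff (by positivity)).1 (le_trans hsup_le h2)
  have hemb := E.emb_besov (heat t g) hMemh t htmem
  have hu1 : t ^ (3/(2*r)) * |X| ≤ C₁ * nh := by
    have hx0le : (‖X‖₊ : ℝ≥0∞) ≤ ⨆ x, (‖heat t (heat t g) x‖₊ : ℝ≥0∞) :=
      le_iSup (fun x => ((‖heat t (heat t g) x‖₊ : ℝ≥0∞))) x₀
    have h1 : ENNReal.ofReal (t ^ (3/(2*r))) * (‖X‖₊ : ℝ≥0∞)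
        ≤ ENNReal.ofReal (C₁ * nh) := by
      refine le_trans (mul_le_mul_right hx0le _) (le_trans hemb (ENNReal.ofReal_le_ofReal ?_))
      nlinarith
    rw [← enorm_eq_nnnorm, Real.enorm_eq_ofReal_abs, ← ENNReal.ofReal_mul (htpow_pos _).le] at h1
    exact (ENNReal.ofReal_le_ofReal_iff (by positivity)).1 h1
  have hexp_eq : 3/r/2 = 3/(2*r) := by
    rw [div_div]; ring_nf
  have hmaster : t ^ ((3:ℝ)/r) * X ≤ C₁^2 * nB^2 := by
    have h4a : t ^ (3/(2*r)) * nh ≤ C₁ * nB^2 := by rw [← hexp_eq]; exact hu2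
    have h5 : t ^ (3/(2*r)) * t ^ (3/(2*r)) = t ^ ((3:ℝ)/r) := by
      rw [← Real.rpow_add ht0]
      congr 1
      field_simp
      ring
    calc t ^ ((3:ℝ)/r) * X ≤ t ^ ((3:ℝ)/r) * |X| :=
          mul_le_mul_of_nonneg_left (le_abs_self X) (htpow_pos _).le
      _ = t ^ (3/(2*r)) * (t ^ (3/(2*r)) * |X|) := by rw [← mul_assoc, h5]
      _ ≤ t ^ (3/(2*r)) * (C₁ * nh) :=
          mul_le_mul_of_nonneg_left hu1 (htpow_pos _).le
      _ = C₁ * (t ^ (3/(2*r)) * nh) := by ring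
      _ ≤ C₁ * (C₁ * nB^2) := mul_le_mul_of_nonneg_left h4a hC₁0
      _ = C₁^2 * nB^2 := by ring
  -- compute the constants
  have hv0 : 0 < (volume (ball (0:E3) 1)).toReal :=
    ENNReal.toReal_pos (measure_ball_pos volume 0 one_pos).ne' measure_ball_lt_top.ne
  set v : ℝ := (volume (ball (0:E3) 1)).toReal with hv_def
  have hvol : (volume (ball x₀ ρ)).toReal = ρ^3 * v := by
    rw [Measure.addHaar_ball volume x₀ hρ0.le, ENNReal.toReal_mul,
      ENNReal.toReal_ofReal (by positivity), hv_def]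
    congr 2
    rw [finrank_euclideanSpace_fin]
  have hpi : (0:ℝ) < 2*Real.pi := by have := Real.pi_pos; linarith
  have hct : cT = (2*Real.pi) ^ (-(3:ℝ)/2) * ρ ^ (-(3:ℝ)) := by
    have h41 : 4*Real.pi*t = (2*Real.pi) * ρ^2 := by rw [ht_def]; ring
    rw [hcT_def, h41, Real.mul_rpow hpi.le (by positivity)]
    congr 1
    rw [← Real.rpow_natCast ρ 2, ← Real.rpow_mul hρ0.le]
    norm_num
  have hexp1 : Real.exp (-(2*ρ)^2 / (4*t)) = Real.exp (-2) := by
    congr 1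
    rw [ht_def]
    field_simp
    ring
  have hexp2 : Real.exp (-ρ^2 / (4*t)) = Real.exp (-(1:ℝ)/2) := by
    congr 1
    rw [ht_def]
    field_simp
    ring
  have hκκ : κ₂ * κ₁ = (2*Real.pi) ^ (-(3:ℝ)) * ρ ^ (-(6:ℝ)) * Real.exp (-(5:ℝ)/2) := by
    have e1 : (2*Real.pi) ^ (-(3:ℝ)/2) * (2*Real.pi) ^ (-(3:ℝ)/2) = (2*Real.pi) ^ (-(3:ℝ)) := by
      rw [← Real.rpow_add hpi]; norm_num
    have e2 : ρ ^ (-(3:ℝ)) * ρ ^ (-(3:ℝ)) = ρ ^ (-(6:ℝ)) := by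
      rw [← Real.rpow_add hρ0]; norm_num
    have e3 : Real.exp (-(1:ℝ)/2) * Real.exp (-2) = Real.exp (-(5:ℝ)/2) := by
      rw [← Real.exp_add]; norm_num
    calc κ₂ * κ₁
        = ((2*Real.pi) ^ (-(3:ℝ)/2) * (2*Real.pi) ^ (-(3:ℝ)/2)) * (ρ ^ (-(3:ℝ)) * ρ ^ (-(3:ℝ)))
            * (Real.exp (-(1:ℝ)/2) * Real.exp (-2)) := by
          rw [hκ₂_def, hκ₁_def, hexp1, hexp2, hct]; ring
      _ = (2*Real.pi) ^ (-(3:ℝ)) * ρ ^ (-(6:ℝ)) * Real.exp (-(5:ℝ)/2) := by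
          rw [e1, e2, e3]
  have hlow : kconst * ρ ^ (-(3:ℝ)) * J ≤ X := by
    refine le_trans (le_of_eq ?_) hstep2
    rw [hvol]
    have e4 : (ρ:ℝ)^(3:ℕ) * ρ ^ (-(6:ℝ)) = ρ ^ (-(3:ℝ)) := by
      rw [← Real.rpow_natCast ρ 3, ← Real.rpow_add hρ0]; norm_num
    have hkc : kconst = (2*Real.pi) ^ (-(3:ℝ)) * Real.exp (-(5:ℝ)/2) * v := rfl
    calc kconst * ρ ^ (-(3:ℝ)) * J
        = (2*Real.pi) ^ (-(3:ℝ)) * Real.exp (-(5:ℝ)/2) * v * (ρ^(3:ℕ) * ρ ^ (-(6:ℝ))) * J := by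
          rw [hkc, ← e4]
      _ = ρ^3 * v * (κ₂ * (κ₁ * J)) := by rw [← mul_assoc (κ₂), hκκ]; ring
  -- put the bounds together
  have hmaster2 : (2 ^ (-(3:ℝ)/2) * kconst * ρ ^ ((6:ℝ)/r - 3)) * J ≤ C₁^2 * nB^2 := by
    have h8 : (2:ℝ) ^ (-(3:ℝ)/2) * ρ ^ ((6:ℝ)/r) ≤ t ^ ((3:ℝ)/r) := by
      have h9 : t ^ ((3:ℝ)/r) = ρ ^ ((6:ℝ)/r) * 2 ^ (-((3:ℝ)/r)) := by
        rw [ht_def, Real.div_rpow (by positivity) (by norm_num),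
          Real.rpow_neg (by norm_num : (0:ℝ) ≤ 2), div_eq_mul_inv]
        congr 1
        rw [← Real.rpow_natCast ρ 2, ← Real.rpow_mul hρ0.le]
        congr 1
        ring
      have h10 : (2:ℝ) ^ (-(3:ℝ)/2) ≤ 2 ^ (-((3:ℝ)/r)) := by
        refine Real.rpow_le_rpow_of_exponent_le one_le_two ?_
        have : (3:ℝ)/r ≤ 3/2 := by
          apply div_le_div_of_nonneg_left (by norm_num) (by norm_num) hr.le
        linarith
      rw [h9]
      calc (2:ℝ) ^ (-(3:ℝ)/2) * ρ ^ ((6:ℝ)/r) ≤ 2 ^ (-((3:ℝ)/r)) * ρ ^ ((6:ℝ)/r) :=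
            mul_le_mul_of_nonneg_right h10 (Real.rpow_pos_of_pos hρ0 _).le
        _ = ρ ^ ((6:ℝ)/r) * 2 ^ (-((3:ℝ)/r)) := by ring
    have hden : 2 ^ (-(3:ℝ)/2) * kconst * ρ ^ ((6:ℝ)/r - 3)
        ≤ t ^ ((3:ℝ)/r) * (kconst * ρ ^ (-(3:ℝ))) := by
      have e5 : ρ ^ ((6:ℝ)/r) * ρ ^ (-(3:ℝ)) = ρ ^ ((6:ℝ)/r - 3) := by
        rw [← Real.rpow_add hρ0]; ring_nf
      calc 2 ^ (-(3:ℝ)/2) * kconst * ρ ^ ((6:ℝ)/r - 3)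
          = (2 ^ (-(3:ℝ)/2) * ρ ^ ((6:ℝ)/r)) * (kconst * ρ ^ (-(3:ℝ))) := by
            rw [← e5]; ring
        _ ≤ t ^ ((3:ℝ)/r) * (kconst * ρ ^ (-(3:ℝ))) := by
            refine mul_le_mul_of_nonneg_right h8 ?_
            exact (mul_pos kconst_pos (Real.rpow_pos_of_pos hρ0 _)).le
    calc (2 ^ (-(3:ℝ)/2) * kconst * ρ ^ ((6:ℝ)/r - 3)) * J
        ≤ (t ^ ((3:ℝ)/r) * (kconst * ρ ^ (-(3:ℝ)))) * J :=
          mul_le_mul_of_nonneg_right hden hJ0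
      _ = t ^ ((3:ℝ)/r) * (kconst * ρ ^ (-(3:ℝ)) * J) := by ring
      _ ≤ t ^ ((3:ℝ)/r) * X := mul_le_mul_of_nonneg_left hlow (htpow_pos _).le
      _ ≤ C₁^2 * nB^2 := hmaster
  have hd0 : (0:ℝ) < 2 ^ (-(3:ℝ)/2) * kconst * ρ ^ ((6:ℝ)/r - 3) :=
    mul_pos (mul_pos (Real.rpow_pos_of_pos two_pos _) kconst_pos)
      (Real.rpow_pos_of_pos hρ0 _)
  set M : ℝ := 2 ^ ((3:ℝ)/2) * kconst⁻¹ * (C₁^2 * nB^2) with hM_def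
  have hM0 : 0 ≤ M := by
    have h1 : (0:ℝ) ≤ kconst⁻¹ := (inv_pos.2 kconst_pos).le
    positivity
  have hJbound : J ≤ M * ρ ^ (3 - (6:ℝ)/r) := by
    have h11 : J ≤ (C₁^2 * nB^2) / (2 ^ (-(3:ℝ)/2) * kconst * ρ ^ ((6:ℝ)/r - 3)) := by
      rw [le_div_iff₀ hd0]
      calc J * (2 ^ (-(3:ℝ)/2) * kconst * ρ ^ ((6:ℝ)/r - 3))
          = (2 ^ (-(3:ℝ)/2) * kconst * ρ ^ ((6:ℝ)/r - 3)) * J := by ring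
        _ ≤ C₁^2 * nB^2 := hmaster2
    refine le_trans h11 (le_of_eq ?_)
    rw [div_eq_mul_inv, mul_inv, mul_inv]
    rw [show (-(3:ℝ)/2) = -((3:ℝ)/2) by ring, Real.rpow_neg (by norm_num : (0:ℝ) ≤ 2), inv_inv]
    rw [← Real.rpow_neg hρ0.le, show -((6:ℝ)/r - 3) = 3 - (6:ℝ)/r by ring]
    rw [hM_def]
    ring
  -- conclude
  rw [hLJ, ENNReal.ofReal_rpow_of_nonneg hJ0 (by norm_num : (0:ℝ) ≤ 1/2),
    ← ENNReal.ofReal_mul (Real.rpow_pos_of_pos hρ0 _).le]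
  apply ENNReal.ofReal_le_ofReal
  have h13 : J ^ ((1:ℝ)/2) ≤ M ^ ((1:ℝ)/2) * ρ ^ ((3:ℝ)/2 - 3/r) := by
    have h14 := Real.rpow_le_rpow hJ0 hJbound (by norm_num : (0:ℝ) ≤ 1/2)
    rw [Real.mul_rpow hM0 (Real.rpow_pos_of_pos hρ0 _).le] at h14
    calc J ^ ((1:ℝ)/2) ≤ M ^ ((1:ℝ)/2) * (ρ ^ ((3:ℝ) - 6/r)) ^ ((1:ℝ)/2) := h14
      _ = M ^ ((1:ℝ)/2) * ρ ^ ((3:ℝ)/2 - 3/r) := by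
          congr 1
          rw [← Real.rpow_mul hρ0.le]
          congr 1
          ring
  have h15 : M ^ ((1:ℝ)/2) = (2 ^ ((3:ℝ)/2) * kconst⁻¹) ^ ((1:ℝ)/2) * (C₁ * nB) := by
    have hA0 : (0:ℝ) ≤ 2 ^ ((3:ℝ)/2) * kconst⁻¹ :=
      (mul_pos (Real.rpow_pos_of_pos two_pos _) (inv_pos.2 kconst_pos)).le
    have hsq : C₁^2 * nB^2 = (C₁*nB)^2 := by ring
    rw [hM_def, hsq, Real.mul_rpow hA0 (sq_nonneg _)]
    congr 1
    rw [← Real.rpow_natCast (C₁*nB) 2, ← Real.rpow_mul (mul_nonneg hC₁0 hnB0)]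
    norm_num
  calc ρ ^ (3/r - 3/2) * J ^ ((1:ℝ)/2)
      ≤ ρ ^ (3/r - 3/2) * (M ^ ((1:ℝ)/2) * ρ ^ ((3:ℝ)/2 - 3/r)) :=
        mul_le_mul_of_nonneg_left h13 (Real.rpow_pos_of_pos hρ0 _).le
    _ = M ^ ((1:ℝ)/2) * (ρ ^ (3/r - 3/2) * ρ ^ ((3:ℝ)/2 - 3/r)) := by ring
    _ = M ^ ((1:ℝ)/2) := by
        rw [← Real.rpow_add hρ0, show (3/r - 3/2) + ((3:ℝ)/2 - 3/r) = 0 by ring,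
          Real.rpow_zero, mul_one]
    _ ≤ morreyC r E * E.toStableSpace.nrm f := by
        rw [h15]
        have hA0 : (0:ℝ) ≤ (2 ^ ((3:ℝ)/2) * kconst⁻¹) ^ ((1:ℝ)/2) :=
          Real.rpow_nonneg (mul_pos (Real.rpow_pos_of_pos two_pos _)
            (inv_pos.2 kconst_pos)).le _
        unfold morreyC
        calc (2 ^ ((3:ℝ)/2) * kconst⁻¹) ^ ((1:ℝ)/2) * (C₁ * nB)
            ≤ (2 ^ ((3:ℝ)/2) * kconst⁻¹) ^ ((1:ℝ)/2) *
                (C₁ * (E.toStableSpace.Cst * E.toStableSpace.nrm f)) := by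
              refine mul_le_mul_of_nonneg_left ?_ hA0
              exact mul_le_mul_of_nonneg_left hBnrm hC₁0
          _ = (2 ^ ((3:ℝ)/2) * kconst⁻¹) ^ ((1:ℝ)/2) * max E.Cr 0 * E.toStableSpace.Cst *
                E.toStableSpace.nrm f := by rw [hC₁_def]; ring

/-- **`r`-stable spaces embed into the Morrey space `M^{2,r}` (Lemma 1 of the paper).** -/
theorem rstable_subset_morrey (r : ℝ) (hr : 2 < r) (E : RStable r) :
    ∃ C : ℝ, 0 < C ∧ ∀ f : E3 → ℝ, E.toStableSpace.Mem f →
      morreyNorm 2 r f ≤ ENNReal.ofReal (C * E.toStableSpace.nrm f) := by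
  refine ⟨max (morreyC r E) 0 + 1, by positivity, fun f hf => ?_⟩
  unfold morreyNorm
  refine iSup_le fun x₀ => iSup_le fun ρ => iSup_le fun hρ => ?_
  refine le_trans (morrey_key r hr E f hf x₀ ρ hρ.1 hρ.2) (ENNReal.ofReal_le_ofReal ?_)
  have h0 := E.toStableSpace.nrm_nonneg f
  have h1 : morreyC r E ≤ max (morreyC r E) 0 + 1 := by
    have := le_max_left (morreyC r E) 0
    linarith
  nlinarith


end
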